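/- Obstruction Logic (OL) and SCL are incomparable in expressivity: the OL formula ⟨†¹⟩Xp has no equivalent SCL formula, and the SCL formula ⟨∠¹⟩X[∠⁰]X¬p has no equivalent OL formula. -/

import Mathlib

set_option linter.unusedVariables false

/-! ## Models -/

structure Mdl (S : Type) where
  rel : S → S → Prop
  val : ℕ → Set S
  cost : S → S → ℕ

namespace Mdl
variable {S : Type}

/-- A proper model: serial relation and positive costs. -/
def IsModel (M : Mdl S) : Prop := (∀ s, ∃ t, M.rel s t) ∧ ∀ s t, 0 < M.cost s t

def Serial (M : Mdl S) : Prop := ∀ s, ∃ t, M.rel s t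

def remove (M : Mdl S) (A : Set (S × S)) : Mdl S :=
  { M with rel := fun a b => M.rel a b ∧ (a, b) ∉ A }

def add (M : Mdl S) (A : Set (S × S)) : Mdl S :=
  { M with rel := fun a b => M.rel a b ∨ (a, b) ∈ A }

/-- The set of edges `A` is finite with total cost at most `n`. -/
def costLe (M : Mdl S) (A : Set (S × S)) (n : ℕ) : Prop :=
  ∃ F : Finset (S × S), A = ↑F ∧ ∑ e ∈ F, M.cost e.1 e.2 ≤ n

end Mdl

abbrev PModel (S : Type) := Mdl S × S
abbrev Strat (S : Type) := PModel S → Set (S × S)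
abbrev MPath (S : Type) := ℕ → PModel S

/-- A demonic strategy outputs a subset of the edges of the given model. -/
def IsDemonic {S : Type} (σ : Strat S) : Prop :=
  ∀ Ms : PModel S, σ Ms ⊆ {e : S × S | Ms.1.rel e.1 e.2}

/-- An angelic strategy outputs a set of non-edges of the given model. -/
def IsAngelic {S : Type} (σ : Strat S) : Prop :=
  ∀ Ms : PModel S, σ Ms ⊆ {e : S × S | ¬ Ms.1.rel e.1 e.2}

/-! ### Demonic (SDL) paths -/

def DStep {S : Type} (σ : Strat S) (x y : PModel S) : Prop :=
  y.1 = x.1.remove (σ x) ∧ y.1.Serial ∧ y.1.rel x.2 y.2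

def DCompat {S : Type} (σ : Strat S) (π : MPath S) : Prop := ∀ i, DStep σ (π i) (π (i+1))

/-- `σ` is an `n`-strategy: on every compatible path each removed set has cost at most `n`. -/
def DBound {S : Type} (σ : Strat S) (n : ℕ) : Prop :=
  ∀ π : MPath S, DCompat σ π → ∀ i, (π i).1.costLe (σ (π i)) n

/-! ### Angelic (SCL) paths -/

def AStep {S : Type} (σ : Strat S) (x y : PModel S) : Prop :=
  y.1 = x.1.add (σ x) ∧ y.1.rel x.2 y.2

def ACompat {S : Type} (σ : Strat S) (π : MPath S) : Prop := ∀ i, AStep σ (π i) (π (i+1))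

def ABound {S : Type} (σ : Strat S) (n : ℕ) : Prop :=
  ∀ π : MPath S, ACompat σ π → ∀ i, (π i).1.costLe (σ (π i)) n

/-! ### Update (SUL) paths: angel budget `n`, demon budget `m` -/

def UStep {S : Type} (Sa Sd : Strat S) (n m : ℕ) (x y : PModel S) : Prop :=
  x.1.costLe (Sa x) n ∧ x.1.costLe (Sd x) m ∧
  y.1 = (x.1.remove (Sd x)).add (Sa x) ∧ y.1.Serial ∧ y.1.rel x.2 y.2

def UCompat {S : Type} (Sa Sd : Strat S) (n m : ℕ) (π : MPath S) : Prop :=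
  ∀ i, UStep Sa Sd n m (π i) (π (i+1))

/-! ## SDL -/

mutual
inductive SDLF : Type
  | atom : ℕ → SDLF
  | neg : SDLF → SDLF
  | and : SDLF → SDLF → SDLF
  | dia : ℕ → SDLP → SDLF
inductive SDLP : Type
  | nxt : SDLF → SDLP
  | untl : SDLF → SDLF → SDLP
  | rls : SDLF → SDLF → SDLP
end

mutual
def SDLSat {S : Type} : PModel S → SDLF → Prop
  | Ms, .atom p => Ms.2 ∈ Ms.1.val p
  | Ms, .neg φ => ¬ SDLSat Ms φ
  | Ms, .and φ χ => SDLSat Ms φ ∧ SDLSat Ms χ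
  | Ms, .dia n ψ => ∃ σ : Strat S, IsDemonic σ ∧ DBound σ n ∧
      ∀ π : MPath S, π 0 = Ms → DCompat σ π → SDLPSat π ψ
def SDLPSat {S : Type} : MPath S → SDLP → Prop
  | π, .nxt φ => SDLSat (π 1) φ
  | π, .untl φ χ => ∃ j, SDLSat (π j) χ ∧ ∀ i < j, SDLSat (π i) φ
  | π, .rls φ χ => (∀ j, SDLSat (π j) χ) ∨ ∃ k, SDLSat (π k) φ ∧ ∀ i ≤ k, SDLSat (π i) χ
end

/-! ## SCL -/

mutual
inductive SCLF : Type
  | atom : ℕ → SCLF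
  | neg : SCLF → SCLF
  | and : SCLF → SCLF → SCLF
  | dia : ℕ → SCLP → SCLF
inductive SCLP : Type
  | nxt : SCLF → SCLP
  | untl : SCLF → SCLF → SCLP
  | rls : SCLF → SCLF → SCLP
end

mutual
def SCLSat {S : Type} : PModel S → SCLF → Prop
  | Ms, .atom p => Ms.2 ∈ Ms.1.val p
  | Ms, .neg φ => ¬ SCLSat Ms φ
  | Ms, .and φ χ => SCLSat Ms φ ∧ SCLSat Ms χ
  | Ms, .dia n ψ => ∃ σ : Strat S, IsAngelic σ ∧ ABound σ n ∧
      ∀ π : MPath S, π 0 = Ms → ACompat σ π → SCLPSat π ψ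
def SCLPSat {S : Type} : MPath S → SCLP → Prop
  | π, .nxt φ => SCLSat (π 1) φ
  | π, .untl φ χ => ∃ j, SCLSat (π j) χ ∧ ∀ i < j, SCLSat (π i) φ
  | π, .rls φ χ => (∀ j, SCLSat (π j) χ) ∨ ∃ k, SCLSat (π k) φ ∧ ∀ i ≤ k, SCLSat (π i) χ
end

/-! ## SUL -/

/-- Coalitions `C ⊆ {∠, ★}`. -/
inductive Coal : Type
  | both : Coal
  | onlyAngel : Coal
  | onlyDemon : Coal
  | neither : Coal

mutual
inductive SULF : Type
  | atom : ℕ → SULF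
  | neg : SULF → SULF
  | and : SULF → SULF → SULF
  | strat : Coal → ℕ → ℕ → SULP → SULF
inductive SULP : Type
  | nxt : SULF → SULP
  | untl : SULF → SULF → SULP
  | rls : SULF → SULF → SULP
end

mutual
def SULSat {S : Type} : PModel S → SULF → Prop
  | Ms, .atom p => Ms.2 ∈ Ms.1.val p
  | Ms, .neg φ => ¬ SULSat Ms φ
  | Ms, .and φ χ => SULSat Ms φ ∧ SULSat Ms χ
  | Ms, .strat .both n m ψ =>
      -- ⟨⟨∠ⁿ,★ᵐ⟩⟩ψ
      ∃ Sa : Strat S, IsAngelic Sa ∧ ∃ Sd : Strat S, IsDemonic Sd ∧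
        ∀ π : MPath S, π 0 = Ms → UCompat Sa Sd n m π → SULPSat π ψ
  | Ms, .strat .onlyAngel n m ψ =>
      -- ⟨⟨∠^{n,m}⟩⟩ψ : angel has budget n, demon budget m
      ∃ Sa : Strat S, IsAngelic Sa ∧ ∀ Sd : Strat S, IsDemonic Sd →
        ∀ π : MPath S, π 0 = Ms → UCompat Sa Sd n m π → SULPSat π ψ
  | Ms, .strat .onlyDemon n m ψ =>
      -- ⟨⟨★^{n,m}⟩⟩ψ : demon has budget n, angel budget m
      ∃ Sd : Strat S, IsDemonic Sd ∧ ∀ Sa : Strat S, IsAngelic Sa →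
        ∀ π : MPath S, π 0 = Ms → UCompat Sa Sd m n π → SULPSat π ψ
  | Ms, .strat .neither n m ψ =>
      -- ⟨⟨∅^{n,m}⟩⟩ψ
      ∀ Sa : Strat S, IsAngelic Sa → ∀ Sd : Strat S, IsDemonic Sd →
        ∀ π : MPath S, π 0 = Ms → UCompat Sa Sd n m π → SULPSat π ψ
def SULPSat {S : Type} : MPath S → SULP → Prop
  | π, .nxt φ => SULSat (π 1) φ
  | π, .untl φ χ => ∃ j, SULSat (π j) χ ∧ ∀ i < j, SULSat (π i) φ
  | π, .rls φ χ => (∀ j, SULSat (π j) χ) ∨ ∃ k, SULSat (π k) φ ∧ ∀ i ≤ k, SULSat (π i) χ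
end

/-! ## Obstruction Logic -/

mutual
inductive OLF : Type
  | atom : ℕ → OLF
  | neg : OLF → OLF
  | and : OLF → OLF → OLF
  | dia : ℕ → OLP → OLF
inductive OLP : Type
  | nxt : OLF → OLP
  | untl : OLF → OLF → OLP
  | rls : OLF → OLF → OLP
end

/-- An OL `n`-strategy over the fixed model `M`. -/
def IsOLStrategy {S : Type} (M : Mdl S) (σ : S → Set (S × S)) (n : ℕ) : Prop :=
  ∀ s, σ s ⊆ {e : S × S | M.rel e.1 e.2} ∧ M.costLe (σ s) n ∧
    ∃ t, M.rel s t ∧ (s, t) ∉ σ s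

def OLCompat {S : Type} (M : Mdl S) (σ : S → Set (S × S)) (π : ℕ → S) : Prop :=
  ∀ i, M.rel (π i) (π (i+1)) ∧ (π i, π (i+1)) ∉ σ (π i)

mutual
def OLSat {S : Type} (M : Mdl S) : S → OLF → Prop
  | s, .atom p => s ∈ M.val p
  | s, .neg φ => ¬ OLSat M s φ
  | s, .and φ χ => OLSat M s φ ∧ OLSat M s χ
  | s, .dia n ψ => ∃ σ : S → Set (S × S), IsOLStrategy M σ n ∧
      ∀ π : ℕ → S, π 0 = s → OLCompat M σ π → OLPSat M π ψ
def OLPSat {S : Type} (M : Mdl S) : (ℕ → S) → OLP → Prop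
  | π, .nxt φ => OLSat M (π 1) φ
  | π, .untl φ χ => ∃ j, OLSat M (π j) χ ∧ ∀ i < j, OLSat M (π i) φ
  | π, .rls φ χ => (∀ j, OLSat M (π j) χ) ∨ ∃ k, OLSat M (π k) φ ∧ ∀ i ≤ k, OLSat M (π i) χ
end

/-! ## CTL -/

inductive CTLF : Type
  | atom : ℕ → CTLF
  | neg : CTLF → CTLF
  | and : CTLF → CTLF → CTLF
  | ax : CTLF → CTLF
  | ex : CTLF → CTLF
  | au : CTLF → CTLF → CTLF
  | ar : CTLF → CTLF → CTLF
  | eu : CTLF → CTLF → CTLF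
  | er : CTLF → CTLF → CTLF

def IsPath {S : Type} (M : Mdl S) (π : ℕ → S) : Prop := ∀ i, M.rel (π i) (π (i+1))

def CTLSat {S : Type} (M : Mdl S) : S → CTLF → Prop
  | s, .atom p => s ∈ M.val p
  | s, .neg φ => ¬ CTLSat M s φ
  | s, .and φ χ => CTLSat M s φ ∧ CTLSat M s χ
  | s, .ax φ => ∀ π : ℕ → S, π 0 = s → IsPath M π → CTLSat M (π 1) φ
  | s, .ex φ => ∃ π : ℕ → S, π 0 = s ∧ IsPath M π ∧ CTLSat M (π 1) φ
  | s, .au φ χ => ∀ π : ℕ → S, π 0 = s → IsPath M π →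
      ∃ j, CTLSat M (π j) χ ∧ ∀ i < j, CTLSat M (π i) φ
  | s, .ar φ χ => ∀ π : ℕ → S, π 0 = s → IsPath M π →
      ((∀ j, CTLSat M (π j) χ) ∨ ∃ k, CTLSat M (π k) φ ∧ ∀ i ≤ k, CTLSat M (π i) χ)
  | s, .eu φ χ => ∃ π : ℕ → S, π 0 = s ∧ IsPath M π ∧
      ∃ j, CTLSat M (π j) χ ∧ ∀ i < j, CTLSat M (π i) φ
  | s, .er φ χ => ∃ π : ℕ → S, π 0 = s ∧ IsPath M π ∧
      ((∀ j, CTLSat M (π j) χ) ∨ ∃ k, CTLSat M (π k) φ ∧ ∀ i ≤ k, CTLSat M (π i) χ)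

/-! ## Statement 6: OL and SCL are incomparable -/

/-- The OL formula `⟨†¹⟩Xp`, with `p` the atom `0`. -/
def olWitness : OLF := OLF.dia 1 (OLP.nxt (OLF.atom 0))

/-- The SCL formula `⟨∠¹⟩X[∠⁰]X¬p`, where `[∠⁰]X¬p = ¬⟨∠⁰⟩¬(X¬p) = ¬⟨∠⁰⟩Xp`
and `p` is atom `0`. -/
def sclWitness : SCLF :=
  SCLF.dia 1 (SCLP.nxt (SCLF.neg (SCLF.dia 0 (SCLP.nxt (SCLF.atom 0)))))


/-! ## Auxiliary development -/

section Aux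

open Classical

lemma Mdl.add_val' {S : Type} (M : Mdl S) (A : Set (S × S)) : (M.add A).val = M.val := rfl

lemma Mdl.total_add {S : Type} (M : Mdl S) (hM : ∀ a b, M.rel a b) (A : Set (S × S)) :
    M.add A = M := by
  cases M with
  | mk rel val cost =>
    unfold Mdl.add
    simp only [Mdl.mk.injEq, and_true]
    funext a b
    exact propext (iff_of_true (Or.inl (hM a b)) (hM a b))

lemma Mdl.costLe_empty {S : Type} (M : Mdl S) (n : ℕ) : M.costLe ∅ n :=
  ⟨∅, by simp⟩

/-- Characterisation of the SCL diamond over total models. -/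
lemma scl_dia_total {S : Type} (M : Mdl S) (hM : ∀ a b, M.rel a b) (s : S) (n : ℕ) (ψ : SCLP) :
    SCLSat (M, s) (SCLF.dia n ψ) ↔ ∀ f : ℕ → S, f 0 = s → SCLPSat (fun i => (M, f i)) ψ := by
  simp only [SCLSat]
  constructor
  · rintro ⟨σ, hA, hB, hall⟩ f hf
    exact hall (fun i => (M, f i)) (by simp [hf])
      (fun i => ⟨(M.total_add hM _).symm, hM _ _⟩)
  · intro h
    refine ⟨fun _ => ∅, fun _ => Set.empty_subset _, fun π _ i => Mdl.costLe_empty _ n, ?_⟩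
    intro π h0 hc
    have hmod : ∀ i, (π i).1 = M := by
      intro i
      induction i with
      | zero => rw [h0]
      | succ k ih => rw [(hc k).1, ih, M.total_add hM]
    have hπ : π = fun i => (M, (π i).2) := funext fun i => Prod.ext (hmod i) rfl
    rw [hπ]
    exact h (fun i => (π i).2) (congrArg Prod.snd h0)

mutual
theorem sclAgreeF {S : Type} (M N : Mdl S) (hM : ∀ a b, M.rel a b) (hN : ∀ a b, N.rel a b)
    (hv : M.val = N.val) : ∀ (χ : SCLF) (s : S), SCLSat (M, s) χ ↔ SCLSat (N, s) χ
  | .atom p, s => by simp only [SCLSat, hv]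
  | .neg φ, s => by
      simp only [SCLSat]; exact not_congr (sclAgreeF M N hM hN hv φ s)
  | .and φ χ, s => by
      simp only [SCLSat]
      exact and_congr (sclAgreeF M N hM hN hv φ s) (sclAgreeF M N hM hN hv χ s)
  | .dia n ψ, s => by
      rw [scl_dia_total M hM, scl_dia_total N hN]
      exact forall_congr' fun f => imp_congr Iff.rfl (sclAgreeP M N hM hN hv ψ f)
theorem sclAgreeP {S : Type} (M N : Mdl S) (hM : ∀ a b, M.rel a b) (hN : ∀ a b, N.rel a b)
    (hv : M.val = N.val) : ∀ (ψ : SCLP) (f : ℕ → S),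
      SCLPSat (fun i => (M, f i)) ψ ↔ SCLPSat (fun i => (N, f i)) ψ
  | .nxt φ, f => by
      simp only [SCLPSat]; exact sclAgreeF M N hM hN hv φ (f 1)
  | .untl φ χ, f => by
      simp only [SCLPSat]
      exact exists_congr fun j => and_congr (sclAgreeF M N hM hN hv χ (f j))
        (forall_congr' fun i => imp_congr Iff.rfl (sclAgreeF M N hM hN hv φ (f i)))
  | .rls φ χ, f => by
      simp only [SCLPSat]
      exact or_congr (forall_congr' fun j => sclAgreeF M N hM hN hv χ (f j))
        (exists_congr fun k => and_congr (sclAgreeF M N hM hN hv φ (f k))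
          (forall_congr' fun i => imp_congr Iff.rfl (sclAgreeF M N hM hN hv χ (f i))))
end

mutual
theorem olAgreeF {S : Type} (R : S → S → Prop) (v₁ v₂ : ℕ → Set S) (c : S → S → ℕ)
    (T : Set S) (hT : ∀ a b, a ∈ T → R a b → b ∈ T)
    (hv : ∀ p x, x ∈ T → (x ∈ v₁ p ↔ x ∈ v₂ p)) :
    ∀ (χ : OLF) (s : S), s ∈ T → (OLSat ⟨R, v₁, c⟩ s χ ↔ OLSat ⟨R, v₂, c⟩ s χ)
  | .atom p, s, hs => by simp only [OLSat]; exact hv p s hs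
  | .neg φ, s, hs => by
      simp only [OLSat]; exact not_congr (olAgreeF R v₁ v₂ c T hT hv φ s hs)
  | .and φ χ, s, hs => by
      simp only [OLSat]
      exact and_congr (olAgreeF R v₁ v₂ c T hT hv φ s hs) (olAgreeF R v₁ v₂ c T hT hv χ s hs)
  | .dia n ψ, s, hs => by
      simp only [OLSat]
      refine exists_congr fun σ => and_congr Iff.rfl ?_
      constructor
      · intro h π h0 hcmp
        have hTi : ∀ i, π i ∈ T := by
          intro i
          induction i with
          | zero => rw [h0]; exact hs
          | succ k ih => exact hT _ _ ih (hcmp k).1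
        exact (olAgreeP R v₁ v₂ c T hT hv ψ π hTi).mp (h π h0 hcmp)
      · intro h π h0 hcmp
        have hTi : ∀ i, π i ∈ T := by
          intro i
          induction i with
          | zero => rw [h0]; exact hs
          | succ k ih => exact hT _ _ ih (hcmp k).1
        exact (olAgreeP R v₁ v₂ c T hT hv ψ π hTi).mpr (h π h0 hcmp)
theorem olAgreeP {S : Type} (R : S → S → Prop) (v₁ v₂ : ℕ → Set S) (c : S → S → ℕ)
    (T : Set S) (hT : ∀ a b, a ∈ T → R a b → b ∈ T)
    (hv : ∀ p x, x ∈ T → (x ∈ v₁ p ↔ x ∈ v₂ p)) :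
    ∀ (ψ : OLP) (π : ℕ → S), (∀ i, π i ∈ T) →
      (OLPSat ⟨R, v₁, c⟩ π ψ ↔ OLPSat ⟨R, v₂, c⟩ π ψ)
  | .nxt φ, π, hπ => by
      simp only [OLPSat]; exact olAgreeF R v₁ v₂ c T hT hv φ (π 1) (hπ 1)
  | .untl φ χ, π, hπ => by
      simp only [OLPSat]
      exact exists_congr fun j => and_congr (olAgreeF R v₁ v₂ c T hT hv χ (π j) (hπ j))
        (forall_congr' fun i => imp_congr Iff.rfl (olAgreeF R v₁ v₂ c T hT hv φ (π i) (hπ i)))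
  | .rls φ χ, π, hπ => by
      simp only [OLPSat]
      exact or_congr (forall_congr' fun j => olAgreeF R v₁ v₂ c T hT hv χ (π j) (hπ j))
        (exists_congr fun k => and_congr (olAgreeF R v₁ v₂ c T hT hv φ (π k) (hπ k))
          (forall_congr' fun i => imp_congr Iff.rfl (olAgreeF R v₁ v₂ c T hT hv χ (π i) (hπ i))))
end

/-! ### Models for the first claim -/

def MA : Mdl Bool := ⟨fun _ _ => True, fun _ => {x | x = true}, fun _ _ => 1⟩
def MB : Mdl Bool := ⟨fun _ _ => True, fun _ => {x | x = true}, fun _ _ => 2⟩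

lemma MA_isModel : MA.IsModel := ⟨fun s => ⟨true, trivial⟩, fun _ _ => Nat.one_pos⟩
lemma MB_isModel : MB.IsModel := ⟨fun s => ⟨true, trivial⟩, fun _ _ => by norm_num [MB]⟩

lemma MA_sat : OLSat MA false olWitness := by
  simp only [olWitness, OLSat]
  refine ⟨fun x => {(x, false)}, ?_, ?_⟩
  · intro s
    refine ⟨fun e he => trivial, ⟨{(s, false)}, by simp, ?_⟩, true, trivial, by simp⟩
    rw [Finset.sum_singleton]
    exact le_refl 1
  · intro π h0 hc
    simp only [OLPSat, OLSat]
    have hne : π 1 ≠ false := by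
      intro hf
      exact (hc 0).2 (by rw [hf]; exact rfl)
    show π 1 = true
    cases hb : π 1 with
    | false => exact absurd hb hne
    | true => rfl

lemma MB_not_sat : ¬ OLSat MB false olWitness := by
  intro h
  simp only [olWitness, OLSat] at h
  obtain ⟨σ, hstrat, hall⟩ := h
  obtain ⟨F, hF, hsum⟩ := (hstrat false).2.1
  have hsum' : ∑ _e ∈ F, 2 ≤ 1 := hsum
  have hF0 : F = ∅ := by
    by_contra hne
    obtain ⟨e, he⟩ := Finset.nonempty_iff_ne_empty.mpr hne
    have h2 : 2 ≤ ∑ _e ∈ F, 2 :=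
      Finset.single_le_sum (f := fun _ : Bool × Bool => 2) (fun _ _ => Nat.zero_le _) he
    omega
  have hσ : σ false = ∅ := by rw [hF, hF0]; simp
  have hres := hall (fun _ => false) rfl
    (fun i => ⟨trivial, by rw [hσ]; exact Set.notMem_empty _⟩)
  simp only [OLPSat, OLSat] at hres
  exact Bool.false_ne_true hres

/-! ### Models for the second claim -/

def R3 : Fin 3 → Fin 3 → Prop := fun a b => (a = 0 ∧ b = 1) ∨ (a = 1 ∧ b = 1) ∨ (a = 2 ∧ b = 2)

def NA : Mdl (Fin 3) := ⟨R3, fun _ => {x | x ≠ 2}, fun _ _ => 1⟩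
def NB : Mdl (Fin 3) := ⟨R3, fun _ => Set.univ, fun _ _ => 1⟩

lemma r3_01 : R3 0 1 := Or.inl ⟨rfl, rfl⟩
lemma r3_11 : R3 1 1 := Or.inr (Or.inl ⟨rfl, rfl⟩)
lemma r3_22 : R3 2 2 := Or.inr (Or.inr ⟨rfl, rfl⟩)
lemma not_r3_12 : ¬ R3 1 2 := by unfold R3; decide
lemma r3_succ0 : ∀ b, R3 0 b → b = 1 := by unfold R3; decide

lemma r3_serial : ∀ s : Fin 3, ∃ t, R3 s t := by
  intro s
  fin_cases s
  · exact ⟨1, r3_01⟩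
  · exact ⟨1, r3_11⟩
  · exact ⟨2, r3_22⟩

lemma NA_isModel : NA.IsModel := ⟨r3_serial, fun _ _ => Nat.one_pos⟩
lemma NB_isModel : NB.IsModel := ⟨r3_serial, fun _ _ => Nat.one_pos⟩

lemma NA_sat : SCLSat (NA, (0 : Fin 3)) sclWitness := by
  classical
  simp only [sclWitness, SCLSat]
  refine ⟨fun Ms => if Ms = (NA, (0 : Fin 3)) then {((1 : Fin 3), (2 : Fin 3))} else ∅,
    ?_, ?_, ?_⟩
  · intro Ms
    by_cases h : Ms = (NA, (0 : Fin 3))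
    · beta_reduce
      rw [if_pos h, h]
      intro e he
      rw [Set.mem_singleton_iff] at he
      subst he
      exact not_r3_12
    · beta_reduce
      rw [if_neg h]
      exact Set.empty_subset _
  · intro π hc i
    by_cases h : π i = (NA, (0 : Fin 3))
    · beta_reduce
      rw [if_pos h, h]
      refine ⟨{((1 : Fin 3), (2 : Fin 3))}, by simp, ?_⟩
      rw [Finset.sum_singleton]
      exact le_refl 1
    · beta_reduce
      rw [if_neg h]
      exact Mdl.costLe_empty _ _
  · intro π h0 hc
    have h1 := hc 0
    rw [h0] at h1
    obtain ⟨hm, hr⟩ := h1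
    beta_reduce at hm
    rw [if_pos rfl] at hm
    have ht : (π 1).2 = 1 := by
      rw [hm] at hr
      rcases hr with h | h
      · exact r3_succ0 _ h
      · have h01 : (0 : Fin 3) = 1 := congrArg Prod.fst h
        exact absurd h01 (by decide)
    have hπ1 : π 1 = (NA.add {((1 : Fin 3), (2 : Fin 3))}, (1 : Fin 3)) := Prod.ext hm ht
    simp only [SCLPSat, SCLSat]
    rw [hπ1]
    rintro ⟨σ', hA', hB', hall'⟩
    set M' := NA.add {((1 : Fin 3), (2 : Fin 3))} with hM'
    let g : ℕ → PModel (Fin 3) :=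
      fun n => Nat.rec (M', (1 : Fin 3)) (fun _ p => (p.1.add (σ' p), (2 : Fin 3))) n
    have hmono : ∀ n a b, M'.rel a b → (g n).1.rel a b := by
      intro n
      induction n with
      | zero => exact fun a b h => h
      | succ k ih => exact fun a b h => Or.inl (ih a b h)
    have hcomp : ACompat σ' g := by
      intro i
      refine ⟨rfl, ?_⟩
      cases i with
      | zero => exact Or.inl (Or.inr rfl)
      | succ k => exact hmono (k + 2) 2 2 (Or.inl r3_22)
    have hres := hall' g rfl hcomp
    exact hres rfl

lemma NB_not_sat : ¬ SCLSat (NB, (0 : Fin 3)) sclWitness := by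
  intro h
  simp only [sclWitness, SCLSat] at h
  obtain ⟨σ, hA, hB, hall⟩ := h
  let g : ℕ → PModel (Fin 3) :=
    fun n => Nat.rec (NB, (0 : Fin 3)) (fun _ p => (p.1.add (σ p), (1 : Fin 3))) n
  have hmono : ∀ n a b, NB.rel a b → (g n).1.rel a b := by
    intro n
    induction n with
    | zero => exact fun a b h => h
    | succ k ih => exact fun a b h => Or.inl (ih a b h)
  have hcomp : ACompat σ g := by
    intro i
    refine ⟨rfl, ?_⟩
    cases i with
    | zero => exact Or.inl r3_01
    | succ k => exact hmono (k + 2) 1 1 r3_11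
  have hres := hall g rfl hcomp
  simp only [SCLPSat, SCLSat] at hres
  apply hres
  refine ⟨fun _ => ∅, fun _ => Set.empty_subset _, fun π _ i => Mdl.costLe_empty _ _, ?_⟩
  intro π' h0' hc'
  have hval : (π' 1).1.val = NB.val := by
    rw [(hc' 0).1, h0']
    rfl
  rw [hval]
  exact Set.mem_univ _

end Aux

/-- OL and SCL are incomparable: the OL formula `⟨†¹⟩Xp` has no equivalent SCL
formula, and the SCL formula `⟨∠¹⟩X[∠⁰]X¬p` has no equivalent OL formula. -/
theorem ol_scl_incomparable :
    (¬ ∃ χ : SCLF, ∀ (S : Type) (M : Mdl S), M.IsModel → ∀ s : S,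
        OLSat M s olWitness ↔ SCLSat (M, s) χ) ∧
    (¬ ∃ χ : OLF, ∀ (S : Type) (M : Mdl S), M.IsModel → ∀ s : S,
        SCLSat (M, s) sclWitness ↔ OLSat M s χ) := by
  constructor
  · rintro ⟨χ, hχ⟩
    have hA := (hχ Bool MA MA_isModel false).mp MA_sat
    have heq := sclAgreeF MA MB (fun _ _ => trivial) (fun _ _ => trivial) rfl χ false
    exact MB_not_sat ((hχ Bool MB MB_isModel false).mpr (heq.mp hA))
  · rintro ⟨χ, hχ⟩
    have hA := (hχ (Fin 3) NA NA_isModel 0).mp NA_sat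
    have heq := olAgreeF R3 (fun _ => {x | x ≠ 2}) (fun _ => Set.univ) (fun _ _ => 1)
      {x : Fin 3 | x ≠ 2}
      (by
        intro a b ha hr
        rcases hr with ⟨_, hb⟩ | ⟨_, hb⟩ | ⟨ha2, _⟩
        · subst hb; exact (by decide : (1 : Fin 3) ≠ 2)
        · subst hb; exact (by decide : (1 : Fin 3) ≠ 2)
        · exact absurd ha2 ha)
      (fun p x hx => iff_of_true hx (Set.mem_univ x))
      χ 0 (by decide : (0 : Fin 3) ≠ 2)
    exact NB_not_sat ((hχ (Fin 3) NB NB_isModel 0).mpr (heq.mp hA))
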